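/- arXiv:2507.10604 — 7 statements merged into one kernel-verified Lean document; each statement's English description precedes it below -/
import Mathlib

section
/- Comparison principle: if (X,u) and (X̃,ũ) both solve the forward system X'(t) = -δX(t) + (1/β)(u(t)-α)⁺, u'(t) = (r+δ)u(t) - (P(X(t))-c)h on [0,T], with the same initial capacity X(0) = X̃(0) but u(0) < ũ(0), and P is Lipschitz and nonincreasing, then for all t ∈ [0,T] one has X(t) ≤ X̃(t) and u(t) < ũ(t). -/
open Set Real

def IsForwardSol (δ β r h α c : ℝ) (P : ℝ → ℝ) (T : ℝ) (X u : ℝ → ℝ) : Prop :=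
  ∀ t ∈ Set.Icc (0 : ℝ) T,
    HasDerivAt X (-δ * X t + (1 / β) * max (u t - α) 0) t ∧
    HasDerivAt u ((r + δ) * u t - (P (X t) - c) * h) t

/-! With `φ = (· - α)⁺`, the differences `D = X̃ - X` and `E = ũ - u` satisfy
`D' = -δ D + (φ ũ - φ u) / β` and `E' = (r + δ) E + h (P X - P X̃)`. After multiplying by the
integrating factors `e^{δt}` and `e^{-(r+δ)t}`, each weighted difference is nondecreasing wherever
the other one is nonnegative, because `φ` is nondecreasing and `P` nonincreasing. A continuous
induction from `D 0 = 0`, `E 0 > 0` then keeps `D ≥ 0` and `e^{-(r+δ)t} E ≥ E 0 > 0` on `[0, T]`. -/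

open Filter Topology

theorem hasDerivAt_exp_neg_mul_mul {f : ℝ → ℝ} {k g t : ℝ} (hf : HasDerivAt f (k * f t + g) t) :
    HasDerivAt (fun s => exp (-(k * s)) * f s) (exp (-(k * t)) * g) t := by
  have he : HasDerivAt (fun s => exp (-(k * s))) (exp (-(k * t)) * -(k * 1)) t :=
    ((hasDerivAt_id t).const_mul k).neg.exp
  exact (he.mul hf).congr_deriv (by ring)

theorem monotoneOn_Icc_of_hasDerivAt_nonneg {f f' : ℝ → ℝ} {a b : ℝ}
    (hf : ∀ t ∈ Icc a b, HasDerivAt f (f' t) t) (hf' : ∀ t ∈ Icc a b, 0 ≤ f' t) :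
    MonotoneOn f (Icc a b) :=
  monotoneOn_of_hasDerivWithinAt_nonneg (convex_Icc a b)
    (fun t ht => (hf t ht).continuousAt.continuousWithinAt)
    (fun t ht => (hf t (interior_subset ht)).hasDerivWithinAt)
    (fun t ht => hf' t (interior_subset ht))

section CoupledComparison

variable {F G F' G' : ℝ → ℝ} {a b : ℝ}

theorem coupled_comparison_of_forall_pos
    (hF : ∀ t ∈ Icc a b, HasDerivAt F (F' t) t) (hG : ∀ t ∈ Icc a b, HasDerivAt G (G' t) t)
    (hF' : ∀ t ∈ Icc a b, 0 ≤ G t → 0 ≤ F' t) (hG' : ∀ t ∈ Icc a b, 0 ≤ F t → 0 ≤ G' t)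
    (hFa : 0 ≤ F a) (hGpos : ∀ t ∈ Icc a b, 0 < G t) :
    ∀ t ∈ Icc a b, 0 ≤ F t ∧ G a ≤ G t := by
  intro t ht
  have ha : a ∈ Icc a b := left_mem_Icc.2 (ht.1.trans ht.2)
  have hFmono := monotoneOn_Icc_of_hasDerivAt_nonneg hF fun s hs => hF' s hs (hGpos s hs).le
  have hFnonneg : ∀ s ∈ Icc a b, 0 ≤ F s := fun s hs => hFa.trans (hFmono ha hs hs.1)
  have hGmono := monotoneOn_Icc_of_hasDerivAt_nonneg hG fun s hs => hG' s hs (hFnonneg s hs)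
  exact ⟨hFnonneg t ht, hGmono ha ht ht.1⟩

theorem coupled_comparison
    (hF : ∀ t ∈ Icc a b, HasDerivAt F (F' t) t) (hG : ∀ t ∈ Icc a b, HasDerivAt G (G' t) t)
    (hF' : ∀ t ∈ Icc a b, 0 ≤ G t → 0 ≤ F' t) (hG' : ∀ t ∈ Icc a b, 0 ≤ F t → 0 ≤ G' t)
    (hFa : 0 ≤ F a) (hGa : 0 < G a) :
    ∀ t ∈ Icc a b, 0 ≤ F t ∧ G a ≤ G t := by
  have hFc : ContinuousOn F (Icc a b) := fun t ht => (hF t ht).continuousAt.continuousWithinAt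
  have hGc : ContinuousOn G (Icc a b) := fun t ht => (hG t ht).continuousAt.continuousWithinAt
  refine fun t ht => IsClosed.Icc_subset_of_forall_mem_nhdsWithin
    (s := {t | 0 ≤ F t ∧ G a ≤ G t}) ?_ ⟨hFa, le_rfl⟩ ?_ ht
  · rw [inter_comm]
    exact (hFc.prodMk hGc).preimage_isClosed_of_isClosed isClosed_Icc
      (isClosed_Ici.prod isClosed_Ici)
  rintro x ⟨⟨hFx, hGx⟩, hxab⟩
  have hx : x ∈ Icc a b := Ico_subset_Icc_self hxab
  -- G stays positive on a right neighbourhood `[x, y]`, where the local comparison applies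
  have hpos : {t | 0 < G t} ∩ Icc a b ∈ 𝓝[≥] x :=
    inter_mem (nhdsWithin_le_nhds ((hG x hx).continuousAt.eventually
      (eventually_gt_nhds (hGa.trans_le hGx)))) (Icc_mem_nhdsGE_of_mem hxab)
  obtain ⟨y, -, hy_nhds, hy_sub⟩ := exists_Icc_mem_subset_of_mem_nhdsGE hpos
  have hsub : Icc x y ⊆ Icc a b := fun t ht => (hy_sub ht).2
  have hloc := coupled_comparison_of_forall_pos (fun t ht => hF t (hsub ht))
    (fun t ht => hG t (hsub ht)) (fun t ht => hF' t (hsub ht)) (fun t ht => hG' t (hsub ht))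
    hFx (fun t ht => (hy_sub ht).1)
  exact mem_of_superset (nhdsWithin_mono x Ioi_subset_Ici_self hy_nhds)
    fun t ht => ⟨(hloc t ht).1, hGx.trans (hloc t ht).2⟩

end CoupledComparison

theorem stmt_1_general (δ β r h T α c : ℝ) (hβ : 0 < β) (hh : 0 < h)
    (P : ℝ → ℝ) (hPmono : Antitone P)
    (X u X' u' : ℝ → ℝ)
    (hsol : IsForwardSol δ β r h α c P T X u)
    (hsol' : IsForwardSol δ β r h α c P T X' u')
    (hX0 : X 0 = X' 0) (hu0 : u 0 < u' 0) :
    ∀ t ∈ Set.Icc (0 : ℝ) T, X t ≤ X' t ∧ u t < u' t := by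
  -- integrating factors remove the linear parts of the equations for the differences
  have hXd : ∀ t ∈ Icc 0 T, HasDerivAt (fun s => exp (-(-δ * s)) * (X' s - X s))
      (exp (-(-δ * t)) * (1 / β * (max (u' t - α) 0 - max (u t - α) 0))) t := fun t ht =>
    hasDerivAt_exp_neg_mul_mul (((hsol' t ht).1.sub (hsol t ht).1).congr_deriv (by ring))
  have hud : ∀ t ∈ Icc 0 T, HasDerivAt (fun s => exp (-((r + δ) * s)) * (u' s - u s))
      (exp (-((r + δ) * t)) * ((P (X t) - P (X' t)) * h)) t := fun t ht =>
    hasDerivAt_exp_neg_mul_mul (((hsol' t ht).2.sub (hsol t ht).2).congr_deriv (by ring))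
  have hG0 : 0 < exp (-((r + δ) * 0)) * (u' 0 - u 0) := mul_pos (exp_pos _) (sub_pos.2 hu0)
  have key := coupled_comparison hXd hud ?_ ?_ (by simp [hX0]) hG0
  · intro t ht
    obtain ⟨hX, hu⟩ := key t ht
    rw [mul_nonneg_iff_of_pos_left (exp_pos _)] at hX
    exact ⟨sub_nonneg.1 hX,
      sub_pos.1 ((mul_pos_iff_of_pos_left (exp_pos _)).1 (hG0.trans_le hu))⟩
  · intro s _ hu
    rw [mul_nonneg_iff_of_pos_left (exp_pos _)] at hu ⊢
    exact mul_nonneg (by positivity) (sub_nonneg.2 (max_le_max_right 0 (by linarith)))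
  · intro s _ hX
    rw [mul_nonneg_iff_of_pos_left (exp_pos _)] at hX ⊢
    exact mul_nonneg (sub_nonneg.2 (hPmono (by linarith))) hh.le

/-- Comparison principle for the forward system. -/
theorem stmt_1 (δ β r h T α c : ℝ) (hδ : 0 < δ) (hβ : 0 < β) (hr : 0 < r)
    (hh : 0 < h) (hT : 0 < T) (hα : 0 < α)
    (P : ℝ → ℝ) (hP : ∃ L : NNReal, LipschitzWith L P) (hPmono : Antitone P)
    (X u X' u' : ℝ → ℝ)
    (hsol : IsForwardSol δ β r h α c P T X u)
    (hsol' : IsForwardSol δ β r h α c P T X' u')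
    (hX0 : X 0 = X' 0) (hu0 : u 0 < u' 0) :
    ∀ t ∈ Set.Icc (0 : ℝ) T, X t ≤ X' t ∧ u t < u' t :=
  stmt_1_general δ β r h T α c hβ hh P hPmono X u X' u' hsol hsol' hX0 hu0
end

section
/- Existence and uniqueness for the forward-backward system: if P is Lipschitz continuous and nonincreasing, then there exists a unique pair of C¹ functions (X,u) on [0,T] satisfying X'(t) = -δX(t) + (1/β)(u(t)-α)⁺ with X(0) = X₀ and u'(t) = (r+δ)u(t) - (P(X(t))-c)h with terminal condition u(T) = 0. -/
/-!
Shooting from `(X(0), u(0)) = (X₀, s)`. The vector field is globally Lipschitz, so this initial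
value problem has a unique solution on `[0, T]`, depending continuously on `s`. Take two solutions
with the same `X(0)` and `u₁(0) < u₂(0)`. As long as `u₁ ≤ u₂`, the monotone control `(u - α)⁺`
keeps `X₁ ≤ X₂`, hence `P(X₂) ≤ P(X₁)`, which in turn gives
`u₂(t) - u₁(t) ≥ e^{(r+δ)t} (u₂(0) - u₁(0)) > 0`; so the ordering never breaks down. Thus
`s ↦ u_s(T)` is continuous and grows at least linearly, hence has exactly one zero.
-/

open Set Real

open Filter
open scoped NNReal

theorem exp_mul_le_of_hasDerivAt {y g : ℝ → ℝ} {κ s : ℝ}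
    (hy : ∀ t ∈ Icc 0 s, HasDerivAt y (κ * y t + g t) t) (hg : ∀ t ∈ Ioo 0 s, 0 ≤ g t) :
    ∀ t ∈ Icc 0 s, exp (κ * t) * y 0 ≤ y t := by
  have hm : ∀ t ∈ Icc 0 s,
      HasDerivAt (fun τ => exp (-κ * τ) * y τ) (exp (-κ * t) * g t) t := by
    intro t ht
    have hexp : HasDerivAt (fun τ => exp (-κ * τ)) (exp (-κ * t) * -κ) t := by
      simpa using ((hasDerivAt_id t).const_mul (-κ)).exp
    exact (hexp.mul (hy t ht)).congr_deriv (by ring)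
  have hmono : MonotoneOn (fun τ => exp (-κ * τ) * y τ) (Icc 0 s) := by
    refine monotoneOn_of_hasDerivWithinAt_nonneg (f' := fun t => exp (-κ * t) * g t)
      (convex_Icc 0 s) (fun t ht => (hm t ht).continuousAt.continuousWithinAt)
      (fun t ht => ?_) (fun t ht => ?_)
    all_goals rw [interior_Icc] at ht
    · exact (hm t (Ioo_subset_Icc_self ht)).hasDerivWithinAt
    · exact mul_nonneg (exp_pos _).le (hg t ht)
  intro t ht
  have h0t : y 0 ≤ exp (-κ * t) * y t := by
    simpa using hmono ⟨le_rfl, ht.1.trans ht.2⟩ ht ht.1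
  calc exp (κ * t) * y 0 ≤ exp (κ * t) * (exp (-κ * t) * y t) := by gcongr
    _ = y t := by rw [← mul_assoc, ← exp_add]; simp

theorem forall_mem_Icc_pos_of_continuousOn {f : ℝ → ℝ} {a b : ℝ} (hf : ContinuousOn f (Icc a b))
    (hstep : ∀ s ∈ Icc a b, (∀ t ∈ Ico a s, 0 < f t) → 0 < f s) : ∀ t ∈ Icc a b, 0 < f t := by
  by_contra! hneg
  set Z := Icc a b ∩ f ⁻¹' Iic 0
  have hZbdd : BddBelow Z := ⟨a, fun t ht => ht.1.1⟩
  have hZ : IsClosed Z := hf.preimage_isClosed_of_isClosed isClosed_Icc isClosed_Iic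
  obtain ⟨t, ht, hft⟩ := hneg
  have hmem : sInf Z ∈ Z := hZ.csInf_mem ⟨t, ht, hft⟩ hZbdd
  refine (hstep _ hmem.1 fun τ hτ => ?_).not_ge hmem.2
  by_contra! hfτ
  exact (csInf_le hZbdd ⟨⟨hτ.1, hτ.2.le.trans hmem.1.2⟩, hfτ⟩).not_gt hτ.2

theorem surjective_of_continuous_of_mul_sub_le {φ : ℝ → ℝ} {κ : ℝ} (hκ : 0 < κ)
    (hφ : Continuous φ) (hgrowth : ∀ s₁ s₂, s₁ < s₂ → κ * (s₂ - s₁) ≤ φ s₂ - φ s₁) :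
    Function.Surjective φ := by
  have hlin : Tendsto (fun s => φ 0 + κ * s) atTop atTop :=
    tendsto_atTop_add_const_left _ _ (tendsto_id.const_mul_atTop hκ)
  refine hφ.surjective (tendsto_atTop_mono' _ ?_ hlin)
    (tendsto_atBot_mono' (f₁ := fun s => φ 0 + κ * s) _ ?_ ?_)
  · filter_upwards [eventually_gt_atTop 0] with s hs
    linarith [hgrowth 0 s hs]
  · filter_upwards [eventually_lt_atBot 0] with s hs
    show φ s ≤ φ 0 + κ * s
    linarith [hgrowth s 0 hs]
  · exact tendsto_atBot_add_const_left _ _ (tendsto_id.const_mul_atBot hκ)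

section LipschitzODE

variable {E : Type*} [NormedAddCommGroup E] [NormedSpace ℝ E] {v : E → E}

theorem exists_forall_hasDerivWithinAt_Icc_glue {a b c : ℝ} (hab : a ≤ b) (hbc : b ≤ c)
    {f g : ℝ → E} (hf : ∀ t ∈ Icc a b, HasDerivWithinAt f (v (f t)) (Icc a b) t)
    (hg : ∀ t ∈ Icc b c, HasDerivWithinAt g (v (g t)) (Icc b c) t) (hfg : f b = g b) :
    ∃ F : ℝ → E, EqOn F f (Icc a b) ∧ EqOn F g (Icc b c) ∧
      ∀ t ∈ Icc a c, HasDerivWithinAt F (v (F t)) (Icc a c) t := by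
  set F : ℝ → E := fun t => if t ≤ b then f t else g t
  have hFf : EqOn F f (Icc a b) := fun t ht => if_pos ht.2
  have hFg : EqOn F g (Icc b c) := fun t ht => by
    rcases ht.1.eq_or_lt with rfl | hlt
    · simp [F, hfg]
    · simp [F, hlt.not_ge]
  refine ⟨F, hFf, hFg, fun t ht => ?_⟩
  have hleft : HasDerivWithinAt F (v (F t)) (Icc a b) t := by
    by_cases htb : t ≤ b
    · have hmem : t ∈ Icc a b := ⟨ht.1, htb⟩
      exact ((hf t hmem).congr_of_mem hFf hmem).congr_deriv (by rw [hFf hmem])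
    · exact HasFDerivWithinAt.of_notMem_closure (by rw [closure_Icc]; exact fun h => htb h.2)
  have hright : HasDerivWithinAt F (v (F t)) (Icc b c) t := by
    by_cases hbt : b ≤ t
    · have hmem : t ∈ Icc b c := ⟨hbt, ht.2⟩
      exact ((hg t hmem).congr_of_mem hFg hmem).congr_deriv (by rw [hFg hmem])
    · exact HasFDerivWithinAt.of_notMem_closure (by rw [closure_Icc]; exact fun h => hbt h.1)
  simpa only [Icc_union_Icc_eq_Icc hab hbc] using hleft.union hright

variable [CompleteSpace E] {K : ℝ≥0}

theorem LipschitzWith.exists_uniform_local_solution (hv : LipschitzWith K v) :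
    ∃ ε > 0, ∀ (t₀ : ℝ) (x₀ : E), ∃ f : ℝ → E, f t₀ = x₀ ∧
      ∀ t ∈ Icc (t₀ - ε) (t₀ + ε), HasDerivWithinAt f (v (f t)) (Icc (t₀ - ε) (t₀ + ε)) t := by
  refine ⟨(2 * (K + 1))⁻¹, by positivity, fun t₀ x₀ => ?_⟩
  set ε : ℝ := (2 * (K + 1))⁻¹
  have hε : 0 < ε := by positivity
  -- Picard–Lindelöf on the ball of radius `2 ε ‖v x₀‖`, where `‖v‖ ≤ 2 ‖v x₀‖` since `K ε ≤ 1/2`.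
  set R : ℝ≥0 := ⟨2 * ε * ‖v x₀‖, by positivity⟩
  have hKε : (K : ℝ) * ε ≤ 1 / 2 := by
    simp only [ε]; rw [← div_eq_mul_inv, div_le_iff₀ (by positivity)]; linarith
  have hpl : IsPicardLindelof (fun _ => v) (tmin := t₀ - ε) (tmax := t₀ + ε)
      ⟨t₀, by constructor <;> linarith⟩ x₀ R 0 (‖v x₀‖₊ + K * R) K := by
    refine IsPicardLindelof.of_time_independent (fun x hx => ?_) hv.lipschitzOnWith ?_
    · have hx' : dist x x₀ ≤ R := Metric.mem_closedBall.mp hx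
      calc ‖v x‖ ≤ ‖v x₀‖ + dist (v x) (v x₀) := by
            rw [dist_eq_norm]; exact norm_le_norm_add_norm_sub' _ _
        _ ≤ ‖v x₀‖ + K * R := by gcongr; exact hv.dist_le_mul_of_le hx'
        _ = _ := by push_cast; rfl
    · simp only [add_sub_cancel_left, sub_sub_cancel, max_self, NNReal.coe_zero, sub_zero]
      change (‖v x₀‖ + K * (2 * ε * ‖v x₀‖)) * ε ≤ 2 * ε * ‖v x₀‖
      nlinarith [mul_le_mul_of_nonneg_right hKε (by positivity : 0 ≤ 2 * ε * ‖v x₀‖)]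
  exact hpl.exists_eq_forall_mem_Icc_hasDerivWithinAt₀

theorem LipschitzWith.exists_solution_Icc (hv : LipschitzWith K v) (x₀ : E) (M : ℝ) :
    ∃ f : ℝ → E, f 0 = x₀ ∧ ∀ t ∈ Icc (-M) M, HasDerivAt f (v (f t)) t := by
  obtain ⟨ε, hε, hloc⟩ := hv.exists_uniform_local_solution
  have hgrow : ∀ n : ℕ, ∃ f : ℝ → E, f 0 = x₀ ∧ ∀ t ∈ Icc (-((n + 1) * ε)) ((n + 1) * ε),
      HasDerivWithinAt f (v (f t)) (Icc (-((n + 1) * ε)) ((n + 1) * ε)) t := by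
    intro n
    induction n with
    | zero => simpa [sub_eq_add_neg] using hloc 0 x₀
    | succ n ih =>
      obtain ⟨f, hf0, hf⟩ := ih
      set ρ : ℝ := (n + 1) * ε
      have hρ : 0 ≤ ρ := by positivity
      obtain ⟨g, hg0, hg⟩ := hloc ρ (f ρ)
      obtain ⟨F, hFf, -, hF⟩ := exists_forall_hasDerivWithinAt_Icc_glue (by linarith)
        (le_add_of_nonneg_right hε.le) hf (fun t ht => (hg t (Icc_subset_Icc
          (by linarith) le_rfl ht)).mono (Icc_subset_Icc (by linarith) le_rfl)) hg0.symm
      obtain ⟨k, hk0, hk⟩ := hloc (-ρ) (F (-ρ))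
      obtain ⟨G, -, hGF, hG⟩ := exists_forall_hasDerivWithinAt_Icc_glue
        (sub_le_self _ hε.le) (by linarith)
        (fun t ht => (hk t (Icc_subset_Icc le_rfl (by linarith) ht)).mono
          (Icc_subset_Icc le_rfl (by linarith))) hF hk0
      refine ⟨G, ?_, ?_⟩
      · rw [hGF ⟨by linarith, by linarith⟩, hFf ⟨by linarith, hρ⟩, hf0]
      · have hρ' : ((n + 1 : ℕ) + 1 : ℝ) * ε = ρ + ε := by push_cast; ring
        rw [hρ', neg_add']
        exact hG
  obtain ⟨n, hn⟩ := exists_nat_gt (M / ε)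
  have hM : M < (n + 1) * ε := by
    rw [div_lt_iff₀ hε] at hn; nlinarith
  obtain ⟨f, hf0, hf⟩ := hgrow n
  refine ⟨f, hf0, fun t ht => (hf t ⟨by linarith [ht.1], by linarith [ht.2]⟩).hasDerivAt
    (Icc_mem_nhds (by linarith [ht.1]) (by linarith [ht.2]))⟩

end LipschitzODE

section ForwardBackward

variable {δ β r h α c : ℝ} {P : ℝ → ℝ} {T : ℝ}

noncomputable def forwardBackwardField (δ β r h α c : ℝ) (P : ℝ → ℝ) (p : ℝ × ℝ) : ℝ × ℝ :=
  (-δ * p.1 + (1 / β) * max (p.2 - α) 0, (r + δ) * p.2 - (P p.1 - c) * h)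

theorem exists_lipschitzWith_forwardBackwardField {L : ℝ≥0} (hP : LipschitzWith L P) :
    ∃ K, LipschitzWith K (forwardBackwardField δ β r h α c P) := by
  have hX := ((lipschitzWith_smul (-δ)).comp LipschitzWith.prod_fst).add
    ((lipschitzWith_smul (1 / β)).comp
      ((LipschitzWith.prod_snd.sub (LipschitzWith.const α)).max_const 0))
  have hu := ((lipschitzWith_smul (r + δ)).comp LipschitzWith.prod_snd).sub
    ((lipschitzWith_smul h).comp ((hP.comp LipschitzWith.prod_fst).sub (LipschitzWith.const c)))
  exact ⟨_, by convert hX.prodMk hu using 1; ext p <;> simp [forwardBackwardField, mul_comm]⟩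

theorem isForwardSol_iff {X u : ℝ → ℝ} :
    IsForwardSol δ β r h α c P T X u ↔ ∀ t ∈ Icc 0 T,
      HasDerivAt (fun τ => (X τ, u τ)) (forwardBackwardField δ β r h α c P (X t, u t)) t := by
  refine forall₂_congr fun t _ => ⟨fun hXu => hXu.1.prodMk hXu.2, fun hXu => ⟨?_, ?_⟩⟩
  · exact hasFDerivAt_fst.comp_hasDerivAt t hXu
  · exact hasFDerivAt_snd.comp_hasDerivAt t hXu

theorem exists_isForwardSol {L : ℝ≥0} (hP : LipschitzWith L P) (T x₀ u₀ : ℝ) :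
    ∃ X u, IsForwardSol δ β r h α c P T X u ∧ X 0 = x₀ ∧ u 0 = u₀ := by
  obtain ⟨K, hK⟩ := exists_lipschitzWith_forwardBackwardField (δ := δ) (β := β) (r := r) (h := h)
    (α := α) (c := c) hP
  obtain ⟨f, hf0, hf⟩ := hK.exists_solution_Icc (x₀, u₀) T
  refine ⟨fun t => (f t).1, fun t => (f t).2, isForwardSol_iff.2 fun t ht => hf t ?_, by simp [hf0],
    by simp [hf0]⟩
  exact ⟨by linarith [ht.1, ht.2], ht.2⟩

namespace IsForwardSol

variable {X u X₁ u₁ X₂ u₂ : ℝ → ℝ}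

theorem mono (hsol : IsForwardSol δ β r h α c P T X u) {s : ℝ} (hs : s ≤ T) :
    IsForwardSol δ β r h α c P s X u :=
  fun t ht => hsol t ⟨ht.1, ht.2.trans hs⟩

theorem dist_le {K : ℝ≥0} (hK : LipschitzWith K (forwardBackwardField δ β r h α c P))
    (h₁ : IsForwardSol δ β r h α c P T X₁ u₁) (h₂ : IsForwardSol δ β r h α c P T X₂ u₂) :
    ∀ t ∈ Icc 0 T, dist (X₁ t, u₁ t) (X₂ t, u₂ t) ≤
      dist (X₁ 0, u₁ 0) (X₂ 0, u₂ 0) * exp (K * t) := by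
  rw [isForwardSol_iff] at h₁ h₂
  simpa using dist_le_of_trajectories_ODE (v := fun _ => forwardBackwardField δ β r h α c P)
    (fun _ => hK) (fun t ht => (h₁ t ht).continuousAt.continuousWithinAt)
    (fun t ht => (h₁ t (Ico_subset_Icc_self ht)).hasDerivWithinAt)
    (fun t ht => (h₂ t ht).continuousAt.continuousWithinAt)
    (fun t ht => (h₂ t (Ico_subset_Icc_self ht)).hasDerivWithinAt) le_rfl

theorem eqOn_of_eq {L : ℝ≥0} (hP : LipschitzWith L P)
    (h₁ : IsForwardSol δ β r h α c P T X₁ u₁) (h₂ : IsForwardSol δ β r h α c P T X₂ u₂)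
    (hX : X₁ 0 = X₂ 0) (hu : u₁ 0 = u₂ 0) : ∀ t ∈ Icc 0 T, X₁ t = X₂ t ∧ u₁ t = u₂ t := by
  obtain ⟨K, hK⟩ := exists_lipschitzWith_forwardBackwardField (δ := δ) (β := β) (r := r) (h := h)
    (α := α) (c := c) hP
  intro t ht
  simpa [hX, hu] using h₁.dist_le hK h₂ t ht

theorem exp_mul_sub_le_sub_of_le (hβ : 0 ≤ β) (hh : 0 ≤ h) (hP : Antitone P)
    (h₁ : IsForwardSol δ β r h α c P T X₁ u₁) (h₂ : IsForwardSol δ β r h α c P T X₂ u₂)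
    (hX : X₁ 0 = X₂ 0) (hu : ∀ t ∈ Ioo 0 T, u₁ t ≤ u₂ t) :
    ∀ t ∈ Icc 0 T, exp ((r + δ) * t) * (u₂ 0 - u₁ 0) ≤ u₂ t - u₁ t := by
  have hX_le : ∀ t ∈ Icc 0 T, exp (-δ * t) * (X₂ 0 - X₁ 0) ≤ X₂ t - X₁ t := by
    refine exp_mul_le_of_hasDerivAt (y := fun t => X₂ t - X₁ t)
      (g := fun t => 1 / β * (max (u₂ t - α) 0 - max (u₁ t - α) 0))
      (fun t ht => ((h₂ t ht).1.sub (h₁ t ht).1).congr_deriv (by ring)) fun t ht => ?_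
    exact mul_nonneg (by positivity) (sub_nonneg.2 (max_le_max_right 0 (by linarith [hu t ht])))
  refine exp_mul_le_of_hasDerivAt (y := fun t => u₂ t - u₁ t)
    (g := fun t => (P (X₁ t) - P (X₂ t)) * h)
    (fun t ht => ((h₂ t ht).2.sub (h₁ t ht).2).congr_deriv (by ring)) fun t ht => ?_
  have := hX_le t (Ioo_subset_Icc_self ht)
  rw [hX, sub_self, mul_zero, sub_nonneg] at this
  exact mul_nonneg (sub_nonneg.2 (hP this)) hh

theorem exp_mul_sub_le_sub (hβ : 0 ≤ β) (hh : 0 ≤ h) (hP : Antitone P)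
    (h₁ : IsForwardSol δ β r h α c P T X₁ u₁) (h₂ : IsForwardSol δ β r h α c P T X₂ u₂)
    (hX : X₁ 0 = X₂ 0) (hu : u₁ 0 < u₂ 0) :
    ∀ t ∈ Icc 0 T, exp ((r + δ) * t) * (u₂ 0 - u₁ 0) ≤ u₂ t - u₁ t := by
  have hpos : ∀ t ∈ Icc 0 T, 0 < u₂ t - u₁ t := by
    refine forall_mem_Icc_pos_of_continuousOn
      (fun t ht => ((h₂ t ht).2.sub (h₁ t ht).2).continuousAt.continuousWithinAt)
      fun s hs hpos => (mul_pos (exp_pos ((r + δ) * s)) (sub_pos.2 hu)).trans_le ?_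
    exact exp_mul_sub_le_sub_of_le hβ hh hP (h₁.mono hs.2) (h₂.mono hs.2) hX
      (fun t ht => sub_nonneg.1 (hpos t (Ioo_subset_Ico_self ht)).le) s ⟨hs.1, le_rfl⟩
  exact exp_mul_sub_le_sub_of_le hβ hh hP h₁ h₂ hX
    fun t ht => sub_nonneg.1 (hpos t (Ioo_subset_Icc_self ht)).le

theorem initial_eq_of_terminal_eq (hβ : 0 ≤ β) (hh : 0 ≤ h) (hP : Antitone P)
    (h₁ : IsForwardSol δ β r h α c P T X₁ u₁) (h₂ : IsForwardSol δ β r h α c P T X₂ u₂)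
    (hX : X₁ 0 = X₂ 0) (hT : 0 ≤ T) (hu : u₁ T = u₂ T) : u₁ 0 = u₂ 0 := by
  by_contra hne
  rcases lt_or_gt_of_ne hne with hlt | hlt
  · have := exp_mul_sub_le_sub hβ hh hP h₁ h₂ hX hlt T ⟨hT, le_rfl⟩
    rw [hu, sub_self] at this
    exact (mul_pos (exp_pos _) (sub_pos.2 hlt)).not_ge this
  · have := exp_mul_sub_le_sub hβ hh hP h₂ h₁ hX.symm hlt T ⟨hT, le_rfl⟩
    rw [hu, sub_self] at this
    exact (mul_pos (exp_pos _) (sub_pos.2 hlt)).not_ge this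

end IsForwardSol

end ForwardBackward

theorem stmt_3_general (δ β r h T α c X₀ : ℝ) (hβ : 0 < β) (hh : 0 < h) (hT : 0 < T)
    (P : ℝ → ℝ) (hP : ∃ L : NNReal, LipschitzWith L P) (hPdec : StrictAnti P) :
    (∃ X u : ℝ → ℝ, IsForwardSol δ β r h α c P T X u ∧ X 0 = X₀ ∧ u T = 0) ∧
    (∀ X u X' u' : ℝ → ℝ,
      IsForwardSol δ β r h α c P T X u → IsForwardSol δ β r h α c P T X' u' →
      X 0 = X₀ → u T = 0 → X' 0 = X₀ → u' T = 0 →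
      ∀ t ∈ Set.Icc (0 : ℝ) T, X t = X' t ∧ u t = u' t) := by
  obtain ⟨L, hPL⟩ := hP
  obtain ⟨K, hK⟩ := exists_lipschitzWith_forwardBackwardField (δ := δ) (β := β) (r := r) (h := h)
    (α := α) (c := c) hPL
  have hTmem : T ∈ Icc 0 T := ⟨hT.le, le_rfl⟩
  choose X u hsol hX0 hu0 using exists_isForwardSol (δ := δ) (β := β) (r := r) (h := h) (α := α)
    (c := c) hPL T X₀
  have hcont : Continuous fun s => u s T := by
    refine (LipschitzWith.of_dist_le_mul fun s₁ s₂ => ?_ :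
      LipschitzWith ⟨exp (K * T), (exp_pos _).le⟩ _).continuous
    calc dist (u s₁ T) (u s₂ T) ≤ dist (X s₁ T, u s₁ T) (X s₂ T, u s₂ T) := le_max_right _ _
      _ ≤ dist (X s₁ 0, u s₁ 0) (X s₂ 0, u s₂ 0) * exp (K * T) :=
        (hsol s₁).dist_le hK (hsol s₂) T hTmem
      _ = exp (K * T) * dist s₁ s₂ := by simp [hX0, hu0, mul_comm]
  have hgrowth : ∀ s₁ s₂, s₁ < s₂ → exp ((r + δ) * T) * (s₂ - s₁) ≤ u s₂ T - u s₁ T :=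
    fun s₁ s₂ hs => by
      simpa [hu0] using (hsol s₁).exp_mul_sub_le_sub hβ.le hh.le hPdec.antitone (hsol s₂)
        (by rw [hX0, hX0]) (by rwa [hu0, hu0]) T hTmem
  obtain ⟨s, hs⟩ := surjective_of_continuous_of_mul_sub_le (exp_pos _) hcont hgrowth 0
  refine ⟨⟨X s, u s, hsol s, hX0 s, hs⟩, fun X u X' u' hsol₁ hsol₂ hX hu hX' hu' => ?_⟩
  have hX_eq : X 0 = X' 0 := hX.trans hX'.symm
  exact hsol₁.eqOn_of_eq hPL hsol₂ hX_eq <| hsol₁.initial_eq_of_terminal_eq hβ.le hh.le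
    hPdec.antitone hsol₂ hX_eq hT.le (hu.trans hu'.symm)

/-- Existence and uniqueness for the forward-backward system with
initial condition `X(0) = X₀` and terminal condition `u(T) = 0`. -/
theorem stmt_3 (δ β r h T α c X₀ : ℝ) (hδ : 0 < δ) (hβ : 0 < β) (hr : 0 < r)
    (hh : 0 < h) (hT : 0 < T) (hα : 0 < α) (hX₀ : 0 ≤ X₀)
    (P : ℝ → ℝ) (hP : ∃ L : NNReal, LipschitzWith L P) (hPdec : StrictAnti P) :
    (∃ X u : ℝ → ℝ, IsForwardSol δ β r h α c P T X u ∧ X 0 = X₀ ∧ u T = 0) ∧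
    (∀ X u X' u' : ℝ → ℝ,
      IsForwardSol δ β r h α c P T X u → IsForwardSol δ β r h α c P T X' u' →
      X 0 = X₀ → u T = 0 → X' 0 = X₀ → u' T = 0 →
      ∀ t ∈ Set.Icc (0 : ℝ) T, X t = X' t ∧ u t = u' t) :=
  stmt_3_general δ β r h T α c X₀ hβ hh hT P hP hPdec
end

section
/- The shooting map u₀ ↦ u(T) for the forward system is Lipschitz: if (X,u) and (X̃,ũ) solve the forward system X' = -δX + (1/β)(u-α)⁺, u' = (r+δ)u - (P(X)-c)h from the same X₀ with initial costates u₀ and ũ₀, and P is L-Lipschitz and nonincreasing, then |u(T) - ũ(T)| ≤ |u₀ - ũ₀| · exp((r + δ + hLM/(2β))T) for a constant M depending only on δ, r, T. -/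
open Set Real

/-!
The difference of the two solutions is controlled in the weighted distance
`γ |X - X'| + |u - u'|` with `γ = hL / r`. Since `(· - α)⁺` is 1-Lipschitz and `P` is
`L`-Lipschitz, the differences satisfy `|ΔX'| ≤ δ |ΔX| + |Δu| / β` and
`|Δu'| ≤ hL |ΔX| + (r + δ) |Δu|`, and the choice of `γ` makes the weighted distance grow at rate
at most `K = r + δ + hL / (rβ)`. As `ΔX(0) = 0`, Grönwall's inequality gives
`|Δu(T)| ≤ |Δu(0)| exp (K T)`, which is the claim with `M = 2 / r`.
-/

section WeightedGronwall

variable {f g f' g' : ℝ → ℝ} {T : ℝ}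

lemma hasDerivAt_toLp_prod {a b t : ℝ} (hf : HasDerivAt f a t) (hg : HasDerivAt g b t) :
    HasDerivAt (fun s ↦ WithLp.toLp 1 (f s, g s)) (WithLp.toLp 1 (a, b)) t :=
  (WithLp.prodContinuousLinearEquiv 1 ℝ ℝ ℝ).symm.hasFDerivAt.comp_hasDerivAt t (hf.prodMk hg)

lemma norm_toLp_one_prod (x y : ℝ) : ‖WithLp.toLp 1 (x, y)‖ = |x| + |y| := by
  simp [WithLp.prod_norm_eq_of_L1, Real.norm_eq_abs]

theorem weighted_abs_le_of_abs_deriv_le {γ K a b c d : ℝ} (hγ : 0 ≤ γ)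
    (hf : ∀ t ∈ Icc 0 T, HasDerivAt f (f' t) t) (hg : ∀ t ∈ Icc 0 T, HasDerivAt g (g' t) t)
    (hf' : ∀ t ∈ Icc 0 T, |f' t| ≤ a * |f t| + b * |g t|)
    (hg' : ∀ t ∈ Icc 0 T, |g' t| ≤ c * |f t| + d * |g t|)
    (hKf : γ * a + c ≤ K * γ) (hKg : γ * b + d ≤ K) :
    ∀ t ∈ Icc 0 T, γ * |f t| + |g t| ≤ (γ * |f 0| + |g 0|) * exp (K * t) := by
  -- `γ * |f| + |g|` need not be differentiable: apply Grönwall to `(γ * f, g)` in the ℓ¹ norm.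
  set F : ℝ → WithLp 1 (ℝ × ℝ) := fun s ↦ WithLp.toLp 1 (γ * f s, g s)
  have hnorm (x y : ℝ) : ‖WithLp.toLp 1 (γ * x, y)‖ = γ * |x| + |y| := by
    rw [norm_toLp_one_prod, abs_mul, abs_of_nonneg hγ]
  have hF : ∀ t ∈ Icc 0 T, HasDerivAt F (WithLp.toLp 1 (γ * f' t, g' t)) t := fun t ht ↦
    hasDerivAt_toLp_prod ((hf t ht).const_mul γ) (hg t ht)
  have hbound : ∀ t ∈ Ico 0 T, ‖WithLp.toLp 1 (γ * f' t, g' t)‖ ≤ K * ‖F t‖ + 0 := by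
    intro t ht
    have ht : t ∈ Icc 0 T := Ico_subset_Icc_self ht
    simp only [F, hnorm, add_zero]
    calc γ * |f' t| + |g' t| ≤ γ * (a * |f t| + b * |g t|) + (c * |f t| + d * |g t|) := by
          gcongr
          exacts [hf' t ht, hg' t ht]
      _ = (γ * a + c) * |f t| + (γ * b + d) * |g t| := by ring
      _ ≤ K * γ * |f t| + K * |g t| := by gcongr
      _ = K * (γ * |f t| + |g t|) := by ring
  intro t ht
  have := norm_le_gronwallBound_of_norm_deriv_right_le
    (fun s hs ↦ (hF s hs).continuousAt.continuousWithinAt)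
    (fun s hs ↦ (hF s (Ico_subset_Icc_self hs)).hasDerivWithinAt) (hnorm _ _).le hbound t ht
  simpa only [F, hnorm, sub_zero, gronwallBound_ε0] using this

end WeightedGronwall

lemma abs_state_rhs_sub_le {δ β α u u' x x' : ℝ} (hδ : 0 ≤ δ) (hβ : 0 ≤ β) :
    |(-δ * x + (1 / β) * max (u - α) 0) - (-δ * x' + (1 / β) * max (u' - α) 0)|
      ≤ δ * |x - x'| + (1 / β) * |u - u'| := by
  have hmax : |max (u - α) 0 - max (u' - α) 0| ≤ |u - u'| := by
    simpa using abs_max_sub_max_le_abs (u - α) (u' - α) 0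
  calc _ = |-δ * (x - x') + (1 / β) * (max (u - α) 0 - max (u' - α) 0)| := by ring_nf
    _ ≤ |-δ * (x - x')| + |(1 / β) * (max (u - α) 0 - max (u' - α) 0)| := abs_add_le _ _
    _ ≤ δ * |x - x'| + (1 / β) * |u - u'| := by
      rw [abs_mul, abs_mul, abs_neg, abs_of_nonneg hδ, abs_of_nonneg (one_div_nonneg.mpr hβ)]
      gcongr

lemma abs_costate_rhs_sub_le {ρ h c L x x' u u' : ℝ} {P : ℝ → ℝ} (hρ : 0 ≤ ρ) (hh : 0 ≤ h)
    (hL : 0 ≤ L) (hP : LipschitzWith (Real.toNNReal L) P) :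
    |(ρ * u - (P x - c) * h) - (ρ * u' - (P x' - c) * h)|
      ≤ h * L * |x - x'| + ρ * |u - u'| := by
  have hPx : |P x - P x'| ≤ L * |x - x'| := by
    simpa [Real.dist_eq, Real.coe_toNNReal L hL] using hP.dist_le_mul x x'
  calc _ = |ρ * (u - u') - h * (P x - P x')| := by ring_nf
    _ ≤ |ρ * (u - u')| + |h * (P x - P x')| := abs_sub _ _
    _ ≤ ρ * |u - u'| + h * (L * |x - x'|) := by
      rw [abs_mul, abs_mul, abs_of_nonneg hρ, abs_of_nonneg hh]
      gcongr
    _ = h * L * |x - x'| + ρ * |u - u'| := by ring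

/-- The shooting map `u₀ ↦ u(T)` is Lipschitz, with constant
`exp((r + δ + hLM/(2β))T)` for some `M` depending only on `δ, r, T`. -/
theorem stmt_4 (δ r T : ℝ) (hδ : 0 < δ) (hr : 0 < r) (hT : 0 < T) :
    ∃ M : ℝ, ∀ (β h α c L : ℝ), 0 < β → 0 < h → 0 < α → 0 ≤ L →
      ∀ (P : ℝ → ℝ), LipschitzWith (Real.toNNReal L) P → Antitone P →
      ∀ (X u X' u' : ℝ → ℝ),
        IsForwardSol δ β r h α c P T X u → IsForwardSol δ β r h α c P T X' u' →
        X 0 = X' 0 →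
        |u T - u' T| ≤ |u 0 - u' 0| * Real.exp ((r + δ + h * L * M / (2 * β)) * T) := by
  refine ⟨2 / r, fun β h α c L hβ hh _ hL P hP _ X u X' u' hXu hXu' hX0 ↦ ?_⟩
  have hγ : 0 ≤ h * L / r := by positivity
  have key := weighted_abs_le_of_abs_deriv_le (f := fun t ↦ X t - X' t) (g := fun t ↦ u t - u' t)
    (K := r + δ + h * L * (2 / r) / (2 * β)) hγ
    (fun t ht ↦ (hXu t ht).1.sub (hXu' t ht).1) (fun t ht ↦ (hXu t ht).2.sub (hXu' t ht).2)
    (fun _ _ ↦ abs_state_rhs_sub_le hδ.le hβ.le)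
    (fun _ _ ↦ abs_costate_rhs_sub_le (by positivity) hh.le hL hP)
    ?_ ?_ T ⟨hT.le, le_rfl⟩
  · simp only [hX0, sub_self, abs_zero, mul_zero, zero_add] at key
    exact (le_add_of_nonneg_left (mul_nonneg hγ (abs_nonneg _))).trans key
  · have hγr : h * L / r * r = h * L := div_mul_cancel₀ _ hr.ne'
    nlinarith [mul_nonneg hγ (show 0 ≤ h * L * (2 / r) / (2 * β) by positivity)]
  · exact le_of_eq (by field_simp; ring)
end

section
/- Lower bound on shooting value: if u₀ < h·min_{t∈[0,T]} ∫₀ᵗ e^{-(r+δ)s}(P(X₀e^{-δs})-c) ds (a quantity that is ≤ 0 < α), then the solution of the forward system X' = -δX + (1/β)(u-α)⁺, u' = (r+δ)u - (P(X)-c)h starting from (X₀,u₀) satisfies u(t) < 0 for all t ∈ [0,T]; in particular u(T) < 0. -/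
open Set Real intervalIntegral

/-
While `u < α` the control term `(u - α)⁺` vanishes, so `X` decays freely, `X t = X₀ e^{-δt}`,
and the variation-of-constants formula for `u` reads
`e^{-(r+δ)t} u t = u₀ - h ∫₀ᵗ e^{-(r+δ)s} (P(X₀ e^{-δs}) - c) ds`, which is negative by assumption.
Hence `u` cannot reach `0`: at the first time `τ` with `u τ = 0` we would still have `u ≤ 0 < α`
on `[0, τ]`, and the formula gives `u τ < 0`.
-/

theorem exp_mul_sub_exp_mul_eq_integral_of_hasDerivAt {f g : ℝ → ℝ} {k a b : ℝ} (hab : a ≤ b)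
    (hf : ∀ s ∈ Icc a b, HasDerivAt f (k * f s + g s) s)
    (hg : IntervalIntegrable g MeasureTheory.volume a b) :
    exp (-k * b) * f b - exp (-k * a) * f a = ∫ s in a..b, exp (-k * s) * g s := by
  refine (integral_eq_sub_of_hasDerivAt (f := fun s => exp (-k * s) * f s) (fun s hs => ?_)
    (hg.continuousOn_mul (g := fun s => exp (-k * s)) (by fun_prop))).symm
  rw [uIcc_of_le hab] at hs
  have hexp : HasDerivAt (fun s => exp (-k * s)) (-k * exp (-k * s)) s := by
    simpa [mul_comm] using ((hasDerivAt_id s).const_mul (-k)).exp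
  exact (hexp.mul (hf s hs)).congr_deriv (by ring)

theorem eq_mul_exp_of_hasDerivAt {f : ℝ → ℝ} {k b : ℝ} (hb : 0 ≤ b)
    (hf : ∀ s ∈ Icc 0 b, HasDerivAt f (k * f s) s) : f b = f 0 * exp (k * b) := by
  have h := exp_mul_sub_exp_mul_eq_integral_of_hasDerivAt (g := 0) hb
    (fun s hs => by simpa using hf s hs) intervalIntegrable_const
  simp only [Pi.zero_apply, mul_zero, integral_zero, exp_zero, one_mul,
    sub_eq_zero, neg_mul, exp_neg] at h
  rw [← h]
  field_simp

theorem ContinuousOn.forall_lt_zero_of_le_zero_imp {u : ℝ → ℝ} {a b : ℝ}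
    (hu : ContinuousOn u (Icc a b)) (ha : u a < 0)
    (hstep : ∀ τ ∈ Icc a b, (∀ s ∈ Icc a τ, u s ≤ 0) → u τ < 0) :
    ∀ t ∈ Icc a b, u t < 0 := by
  by_contra! ⟨t, ht, hut⟩
  set S := {s ∈ Icc a b | 0 ≤ u s}
  have hS : IsCompact S :=
    isCompact_Icc.of_isClosed_subset (hu.preimage_isClosed_of_isClosed isClosed_Icc isClosed_Ici)
      fun _ hs => hs.1
  obtain ⟨hτ, huτ⟩ : sInf S ∈ S := hS.sInf_mem ⟨t, ht, hut⟩
  have hbefore : ∀ s ∈ Ico a (sInf S), u s ≤ 0 := fun s hs => by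
    by_contra! h
    exact (csInf_le hS.bddBelow ⟨⟨hs.1, hs.2.le.trans hτ.2⟩, h.le⟩).not_gt hs.2
  have huτ_le : u (sInf S) ≤ 0 := by
    rcases hτ.1.eq_or_lt with hτa | hτa
    · exact hτa ▸ ha.le
    · refine ContinuousWithinAt.closure_le (by simp [closure_Ico hτa.ne, hτa.le])
        ((hu _ hτ).mono (Icc_subset_Icc_right hτ.2 |>.trans' Ico_subset_Icc_self))
        continuousWithinAt_const hbefore
  refine (hstep _ hτ fun s hs => ?_).not_ge huτ
  rcases hs.2.eq_or_lt with rfl | hsτ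
  exacts [huτ_le, hbefore s ⟨hs.1, hsτ⟩]

theorem stmt_6_general (δ β r h T α c X₀ : ℝ)
    (hT : 0 < T) (hα : 0 < α)
    (P : ℝ → ℝ) (hP : Continuous P)
    (X u : ℝ → ℝ) (u₀ : ℝ)
    (hsol : IsForwardSol δ β r h α c P T X u)
    (hX0 : X 0 = X₀) (hu0 : u 0 = u₀)
    (hsmall : ∀ t ∈ Set.Icc (0 : ℝ) T,
      u₀ < h * ∫ s in (0:ℝ)..t,
        Real.exp (-(r + δ) * s) * (P (X₀ * Real.exp (-δ * s)) - c)) :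
    (∀ t ∈ Set.Icc (0 : ℝ) T, u t < 0) ∧ u T < 0 := by
  have hu₀ : u₀ < 0 := by simpa using hsmall 0 ⟨le_rfl, hT.le⟩
  have hXc : ContinuousOn X (Icc 0 T) := fun t ht => (hsol t ht).1.continuousAt.continuousWithinAt
  have huc : ContinuousOn u (Icc 0 T) := fun t ht => (hsol t ht).2.continuousAt.continuousWithinAt
  have hneg : ∀ t ∈ Icc 0 T, u t < 0 := by
    refine huc.forall_lt_zero_of_le_zero_imp (hu0 ▸ hu₀) fun τ hτ hle => ?_
    have hsub : Icc 0 τ ⊆ Icc 0 T := Icc_subset_Icc_right hτ.2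
    have hX : ∀ s ∈ Icc 0 τ, X s = X₀ * exp (-δ * s) := fun s hs =>
      hX0 ▸ eq_mul_exp_of_hasDerivAt hs.1 fun s' hs' => by
        have hs'τ : s' ∈ Icc 0 τ := Icc_subset_Icc_right hs.2 hs'
        simpa [max_eq_right (by linarith [hle s' hs'τ] : u s' - α ≤ 0)]
          using (hsol s' (hsub hs'τ)).1
    have hvar := exp_mul_sub_exp_mul_eq_integral_of_hasDerivAt (k := r + δ)
      (g := fun s => -((P (X s) - c) * h)) hτ.1
      (fun s hs => by simpa [sub_eq_add_neg] using (hsol s (hsub hs)).2)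
      ((((hP.comp_continuousOn (hXc.mono hsub)).sub continuousOn_const).mul
        continuousOn_const).neg.intervalIntegrable_of_Icc hτ.1)
    have hint : (∫ s in (0:ℝ)..τ, exp (-(r + δ) * s) * -((P (X s) - c) * h))
        = -h * ∫ s in (0:ℝ)..τ, exp (-(r + δ) * s) * (P (X₀ * exp (-δ * s)) - c) := by
      rw [← integral_const_mul]
      refine integral_congr fun s hs => ?_
      rw [uIcc_of_le hτ.1] at hs
      simp only [hX s hs]
      ring
    have hw : exp (-(r + δ) * τ) * u τ < 0 := by
      simp only [hint, mul_zero, exp_zero, one_mul, hu0] at hvar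
      linarith [hsmall τ hτ]
    exact neg_of_mul_neg_right hw (exp_pos _).le
  exact ⟨hneg, hneg T ⟨hT.le, le_rfl⟩⟩

/-- If the initial costate lies strictly below
`h · min_{t∈[0,T]} ∫₀ᵗ e^{-(r+δ)s}(P(X₀e^{-δs})-c) ds`, then the costate stays
strictly negative on `[0,T]`; in particular `u(T) < 0`. -/
theorem stmt_6 (δ β r h T α c X₀ : ℝ) (hδ : 0 < δ) (hβ : 0 < β) (hr : 0 < r)
    (hh : 0 < h) (hT : 0 < T) (hα : 0 < α) (hX₀ : 0 ≤ X₀)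
    (P : ℝ → ℝ) (hP : Continuous P) (hPmono : Antitone P)
    (X u : ℝ → ℝ) (u₀ : ℝ)
    (hsol : IsForwardSol δ β r h α c P T X u)
    (hX0 : X 0 = X₀) (hu0 : u 0 = u₀)
    (hsmall : ∀ t ∈ Set.Icc (0 : ℝ) T,
      u₀ < h * ∫ s in (0:ℝ)..t,
        Real.exp (-(r + δ) * s) * (P (X₀ * Real.exp (-δ * s)) - c)) :
    (∀ t ∈ Set.Icc (0 : ℝ) T, u t < 0) ∧ u T < 0 :=
  stmt_6_general δ β r h T α c X₀ hT hα P hP X u u₀ hsol hX0 hu0 hsmall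
end

section
/- Upper bound on shooting value: if u₀ > h·∫₀ᵀ e^{-(r+δ)t}(P(X₀e^{-δt})-c) dt, then the solution of the forward system X' = -δX + (1/β)(u-α)⁺, u' = (r+δ)u - (P(X)-c)h starting from (X₀,u₀) (with P nonincreasing so that P(X(t)) ≤ P(X₀e^{-δt})) satisfies u(T) > 0. -/
open Set Real intervalIntegral

/-! Nonnegative investment can only slow the decay of the stock, so `X t ≥ X₀ e^{-δt}` and hence
`P (X t) ≤ P (X₀ e^{-δt})`. Integrating the costate equation against the discount factor
`e^{-(r+δ)t}` gives `e^{-(r+δ)T} u T = u₀ - h ∫₀ᵀ e^{-(r+δ)t} (P (X t) - c) dt`, and the integral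
is at most the one in the hypothesis. -/

theorem mul_exp_neg_le_of_hasDerivAt {δ T : ℝ} {X g : ℝ → ℝ}
    (hX : ∀ t ∈ Icc 0 T, HasDerivAt X (-δ * X t + g t) t) (hg : ∀ t ∈ Icc 0 T, 0 ≤ g t) :
    ∀ t ∈ Icc 0 T, X 0 * exp (-δ * t) ≤ X t := by
  have hw : ∀ t ∈ Icc 0 T,
      HasDerivAt (fun s => exp (δ * s) * X s) (exp (δ * t) * g t) t := fun t ht =>
    (((hasDerivAt_id t).const_mul δ).exp.mul (hX t ht)).congr_deriv (by simp; ring)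
  have hmono : MonotoneOn (fun s => exp (δ * s) * X s) (Icc 0 T) := by
    refine monotoneOn_of_hasDerivWithinAt_nonneg (convex_Icc 0 T)
      (fun t ht => (hw t ht).continuousAt.continuousWithinAt)
      (fun t ht => (hw t (interior_subset ht)).hasDerivWithinAt)
      (fun t ht => mul_nonneg (exp_pos _).le (hg t (interior_subset ht)))
  intro t ht
  have h0t := hmono (left_mem_Icc.2 (ht.1.trans ht.2)) ht ht.1
  simp only [mul_zero, exp_zero, one_mul] at h0t
  calc X 0 * exp (-δ * t) ≤ exp (δ * t) * X t * exp (-δ * t) :=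
        mul_le_mul_of_nonneg_right h0t (exp_pos _).le
    _ = X t := by rw [mul_comm, ← mul_assoc, ← exp_add]; simp

theorem exp_neg_mul_mul_eq_sub_integral {ρ T : ℝ} {u f : ℝ → ℝ} (hT : 0 ≤ T)
    (hu : ∀ t ∈ Icc 0 T, HasDerivAt u (ρ * u t - f t) t) (hf : ContinuousOn f (Icc 0 T)) :
    exp (-ρ * T) * u T = u 0 - ∫ t in (0 : ℝ)..T, exp (-ρ * t) * f t := by
  have hv : ∀ t ∈ uIcc 0 T,
      HasDerivAt (fun s => exp (-ρ * s) * u s) (-(exp (-ρ * t) * f t)) t := fun t ht =>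
    (((hasDerivAt_id t).const_mul (-ρ)).exp.mul (hu t (uIcc_of_le hT ▸ ht))).congr_deriv
      (by simp; ring)
  have hint : IntervalIntegrable (fun t => -(exp (-ρ * t) * f t)) MeasureTheory.volume 0 T := by
    refine (ContinuousOn.neg ?_).intervalIntegrable
    rw [uIcc_of_le hT]
    exact (continuous_exp.comp (continuous_const.mul continuous_id)).continuousOn.mul hf
  have hftc := integral_eq_sub_of_hasDerivAt hv hint
  rw [intervalIntegral.integral_neg] at hftc
  simp only [mul_zero, exp_zero, one_mul] at hftc
  linarith

theorem stmt_7_general (δ β r h T α c X₀ : ℝ) (hβ : 0 < β)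
    (hh : 0 < h) (hT : 0 < T)
    (P : ℝ → ℝ) (hP : Continuous P) (hPmono : Antitone P)
    (X u : ℝ → ℝ) (u₀ : ℝ)
    (hsol : IsForwardSol δ β r h α c P T X u)
    (hX0 : X 0 = X₀) (hu0 : u 0 = u₀)
    (hbig : u₀ > h * ∫ t in (0:ℝ)..T,
      Real.exp (-(r + δ) * t) * (P (X₀ * Real.exp (-δ * t)) - c)) :
    u T > 0 := by
  have hXlb : ∀ t ∈ Icc 0 T, X₀ * exp (-δ * t) ≤ X t := hX0 ▸
    mul_exp_neg_le_of_hasDerivAt (fun t ht => (hsol t ht).1) (fun t _ => by positivity)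
  have hXc : ContinuousOn X (Icc 0 T) := fun t ht =>
    (hsol t ht).1.continuousAt.continuousWithinAt
  have hdisc := exp_neg_mul_mul_eq_sub_integral hT.le (fun t ht => (hsol t ht).2)
    (((hP.comp_continuousOn hXc).sub continuousOn_const).mul continuousOn_const)
  have hcmp : ∫ t in (0:ℝ)..T, exp (-(r + δ) * t) * ((P (X t) - c) * h) ≤
      h * ∫ t in (0:ℝ)..T, exp (-(r + δ) * t) * (P (X₀ * exp (-δ * t)) - c) := by
    rw [← intervalIntegral.integral_const_mul]
    refine integral_mono_on hT.le ?_ ?_ fun t ht => ?_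
    · refine ContinuousOn.intervalIntegrable ?_
      rw [uIcc_of_le hT.le]
      exact (continuous_exp.comp (continuous_const.mul continuous_id)).continuousOn.mul
        (((hP.comp_continuousOn hXc).sub continuousOn_const).mul continuousOn_const)
    · exact (by fun_prop : Continuous fun t =>
        h * (exp (-(r + δ) * t) * (P (X₀ * exp (-δ * t)) - c))).intervalIntegrable 0 T
    · have := mul_le_mul_of_nonneg_left (hPmono (hXlb t ht))
        (mul_nonneg (exp_pos (-(r + δ) * t)).le hh.le)
      linarith
  have hpos : 0 < exp (-(r + δ) * T) * u T := by rw [hdisc, hu0]; linarith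
  exact pos_of_mul_pos_right hpos (exp_pos _).le

/-- If the initial costate lies strictly above
`h · ∫₀ᵀ e^{-(r+δ)t}(P(X₀e^{-δt})-c) dt`, then the terminal costate is positive. -/
theorem stmt_7 (δ β r h T α c X₀ : ℝ) (hδ : 0 < δ) (hβ : 0 < β) (hr : 0 < r)
    (hh : 0 < h) (hT : 0 < T) (hα : 0 < α) (hX₀ : 0 ≤ X₀)
    (P : ℝ → ℝ) (hP : Continuous P) (hPmono : Antitone P)
    (X u : ℝ → ℝ) (u₀ : ℝ)
    (hsol : IsForwardSol δ β r h α c P T X u)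
    (hX0 : X 0 = X₀) (hu0 : u 0 = u₀)
    (hbig : u₀ > h * ∫ t in (0:ℝ)..T,
      Real.exp (-(r + δ) * t) * (P (X₀ * Real.exp (-δ * t)) - c)) :
    u T > 0 :=
  stmt_7_general δ β r h T α c X₀ hβ hh hT P hP hPmono X u u₀ hsol hX0 hu0 hbig
end

section
/- Single-threshold structure of the costate: under the assumptions (P(X₀)-c)h > (r+δ)α and that there exists t₀ ∈ [0,T] with h·∫_{t₀}^T e^{-(r+δ)(s-t₀)}(P(X₀e^{-δs})-c) ds > α, the unique solution (X,u) of the forward-backward system (with u(T)=0) admits a time T* ∈ (0,T) such that u(t) ≥ α for all t ≤ T* and u(t) ≤ α for all t ≥ T*. -/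
/-!
While `u ≤ α` the control is off, so `X` decays like `e^{-δt}`. Hence `u` must exceed `α`
somewhere: otherwise the variation-of-constants formula for `u` on `[t₀, T]` would give
`u t₀ > α`. Let `T*` be the last time with `u = α`. If `u` dipped below `α` before `T*`, take the
stretch around the dip on which `u ≤ α`. Where it ends, `u` crosses `α` upward, so
`(P(X) - c)h ≤ (r + δ)α < (P(X₀) - c)h` and `X` is larger there than `X₀`; where it starts, `u`
crosses `α` downward (or the stretch starts at `0`), so `X` is no larger there than at the end.
This contradicts the strict decay of the positive `X` on the stretch.
-/

open Set Real intervalIntegral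

open Filter Topology

theorem HasDerivAt.nonneg_of_forall_le_left {f : ℝ → ℝ} {f' a b : ℝ} (hab : a < b)
    (hf : HasDerivAt f f' b) (hle : ∀ t ∈ Ioo a b, f t ≤ f b) : 0 ≤ f' := by
  have hslope : Tendsto (slope f b) (𝓝[<] b) (𝓝 f') :=
    (hasDerivAt_iff_tendsto_slope.1 hf).mono_left (nhdsWithin_mono _ fun _ ht => ne_of_lt ht)
  refine ge_of_tendsto hslope ?_
  filter_upwards [Ioo_mem_nhdsLT hab] with t ht
  rw [slope_def_field]
  exact div_nonneg_of_nonpos (sub_nonpos.2 (hle t ht)) (sub_nonpos.2 ht.2.le)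

theorem HasDerivAt.nonpos_of_forall_le_right {f : ℝ → ℝ} {f' a b : ℝ} (hab : a < b)
    (hf : HasDerivAt f f' a) (hle : ∀ t ∈ Ioo a b, f t ≤ f a) : f' ≤ 0 := by
  have hslope : Tendsto (slope f a) (𝓝[>] a) (𝓝 f') :=
    (hasDerivAt_iff_tendsto_slope.1 hf).mono_left (nhdsWithin_mono _ fun _ ht => ne_of_gt ht)
  refine le_of_tendsto hslope ?_
  filter_upwards [Ioo_mem_nhdsGT hab] with t ht
  rw [slope_def_field]
  exact div_nonpos_of_nonpos_of_nonneg (sub_nonpos.2 (hle t ht)) (sub_nonneg.2 ht.1.le)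

theorem exists_first_crossing {f : ℝ → ℝ} {a b y : ℝ} (hab : a ≤ b)
    (hf : ContinuousOn f (Icc a b)) (ha : f a < y) (hb : y ≤ f b) :
    ∃ c ∈ Ioc a b, f c = y ∧ ∀ t ∈ Ico a c, f t < y := by
  set S := Icc a b ∩ f ⁻¹' Ici y
  have hS : IsCompact S :=
    isCompact_Icc.of_isClosed_subset (hf.preimage_isClosed_of_isClosed isClosed_Icc isClosed_Ici)
      inter_subset_left
  have hc : sInf S ∈ S := hS.sInf_mem ⟨b, ⟨hab, le_rfl⟩, hb⟩
  have hbelow : ∀ t ∈ Ico a (sInf S), f t < y := fun t ht => not_le.1 fun hyt =>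
    ht.2.not_ge (csInf_le hS.bddBelow ⟨⟨ht.1, ht.2.le.trans hc.1.2⟩, hyt⟩)
  obtain ⟨t, ht, hft⟩ := intermediate_value_Icc hc.1.1 (hf.mono (Icc_subset_Icc_right hc.1.2))
    ⟨ha.le, hc.2⟩
  have htc : t = sInf S := ht.2.antisymm (csInf_le hS.bddBelow ⟨⟨ht.1, ht.2.trans hc.1.2⟩, hft.ge⟩)
  refine ⟨sInf S, ⟨hc.1.1.lt_of_ne ?_, hc.1.2⟩, htc ▸ hft, hbelow⟩
  rintro hac
  exact ha.not_ge (hac ▸ hc.2)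

theorem exists_last_crossing {f : ℝ → ℝ} {a b y : ℝ} (hab : a ≤ b)
    (hf : ContinuousOn f (Icc a b)) (ha : y ≤ f a) (hb : f b < y) :
    ∃ c ∈ Ico a b, f c = y ∧ ∀ t ∈ Ioc c b, f t < y := by
  set S := Icc a b ∩ f ⁻¹' Ici y
  have hS : IsCompact S :=
    isCompact_Icc.of_isClosed_subset (hf.preimage_isClosed_of_isClosed isClosed_Icc isClosed_Ici)
      inter_subset_left
  have hc : sSup S ∈ S := hS.sSup_mem ⟨a, ⟨le_rfl, hab⟩, ha⟩
  have habove : ∀ t ∈ Ioc (sSup S) b, f t < y := fun t ht => not_le.1 fun hyt =>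
    ht.1.not_ge (le_csSup hS.bddAbove ⟨⟨hc.1.1.trans ht.1.le, ht.2⟩, hyt⟩)
  obtain ⟨t, ht, hft⟩ := intermediate_value_Icc' hc.1.2 (hf.mono (Icc_subset_Icc_left hc.1.1))
    ⟨hb.le, hc.2⟩
  have htc : t = sSup S :=
    (le_csSup hS.bddAbove ⟨⟨hc.1.1.trans ht.1, ht.2⟩, hft.ge⟩).antisymm ht.1
  refine ⟨sSup S, ⟨hc.1.1, hc.1.2.lt_of_ne ?_⟩, htc ▸ hft, habove⟩
  rintro hcb
  exact hb.not_ge (hcb ▸ hc.2)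

theorem eq_exp_mul_add_integral_of_hasDerivAt {u g : ℝ → ℝ} {k a b : ℝ} (hab : a ≤ b)
    (hu : ∀ t ∈ Icc a b, HasDerivAt u (k * u t - g t) t) (hg : ContinuousOn g (Icc a b)) :
    u a = exp (-k * (b - a)) * u b + ∫ s in a..b, exp (-k * (s - a)) * g s := by
  have hF : ∀ t ∈ uIcc a b, HasDerivAt (fun s => exp (-k * (s - a)) * u s)
      (-(exp (-k * (t - a)) * g t)) t := by
    intro t ht
    rw [uIcc_of_le hab] at ht
    have he : HasDerivAt (fun s => exp (-k * (s - a))) (exp (-k * (t - a)) * -k) t := by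
      simpa using (((hasDerivAt_id' t).sub_const a).const_mul (-k)).exp
    exact (he.fun_mul (hu t ht)).congr_deriv (by ring)
  have hint : IntervalIntegrable (fun t => -(exp (-k * (t - a)) * g t)) MeasureTheory.volume a b :=
    ContinuousOn.intervalIntegrable (by
      rw [uIcc_of_le hab]
      exact ((by fun_prop : Continuous fun t => exp (-k * (t - a))).continuousOn.mul hg).neg)
  have hFTC := integral_eq_sub_of_hasDerivAt hF hint
  rw [integral_neg, sub_self, mul_zero, exp_zero, one_mul] at hFTC
  linarith

theorem eq_mul_exp_of_hasDerivAt_s8 {X : ℝ → ℝ} {k a b : ℝ} (hab : a ≤ b)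
    (hX : ∀ t ∈ Icc a b, HasDerivAt X (k * X t) t) : X b = X a * exp (k * (b - a)) := by
  have h := eq_exp_mul_add_integral_of_hasDerivAt (g := fun _ => 0) hab
    (fun t ht => by simpa using hX t ht) continuousOn_const
  simp only [mul_zero, integral_zero, add_zero] at h
  rw [h, mul_right_comm, ← exp_add, neg_mul, neg_add_cancel, exp_zero, one_mul]

namespace IsForwardSol

variable {δ β r h α c T X₀ : ℝ} {P : ℝ → ℝ} {X u : ℝ → ℝ}

theorem continuousOn_state (hsol : IsForwardSol δ β r h α c P T X u) :
    ContinuousOn X (Icc 0 T) :=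
  fun t ht => (hsol t ht).1.continuousAt.continuousWithinAt

theorem continuousOn_costate (hsol : IsForwardSol δ β r h α c P T X u) :
    ContinuousOn u (Icc 0 T) :=
  fun t ht => (hsol t ht).2.continuousAt.continuousWithinAt

theorem state_eq_mul_exp (hsol : IsForwardSol δ β r h α c P T X u) {a b : ℝ} (ha : 0 ≤ a)
    (hab : a ≤ b) (hb : b ≤ T) (hu : ∀ t ∈ Icc a b, u t ≤ α) :
    X b = X a * exp (-δ * (b - a)) :=
  eq_mul_exp_of_hasDerivAt_s8 hab fun t ht => (hsol t ⟨ha.trans ht.1, ht.2.trans hb⟩).1.congr_deriv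
    (by rw [max_eq_right (sub_nonpos.2 (hu t ht))]; ring)

theorem state_lt_of_costate_le (hsol : IsForwardSol δ β r h α c P T X u) (hδ : 0 < δ)
    {a b : ℝ} (ha : 0 ≤ a) (hab : a < b) (hb : b ≤ T) (hu : ∀ t ∈ Icc a b, u t ≤ α)
    (hXb : 0 < X b) : X b < X a := by
  have hdecay := hsol.state_eq_mul_exp ha hab.le hb hu
  have hexp : exp (-δ * (b - a)) < 1 := exp_lt_one_iff.2 (by nlinarith)
  have hXa : 0 < X a := pos_of_mul_pos_left (hdecay ▸ hXb) (exp_pos _).le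
  calc X b = X a * exp (-δ * (b - a)) := hdecay
    _ < X a := mul_lt_of_lt_one_right hXa hexp

theorem price_le_of_upcrossing (hsol : IsForwardSol δ β r h α c P T X u) {a b : ℝ}
    (hab : a < b) (hb : b ∈ Icc 0 T) (hub : u b = α) (hbelow : ∀ t ∈ Ioo a b, u t ≤ α) :
    (P (X b) - c) * h ≤ (r + δ) * α := by
  have := (hsol b hb).2.nonneg_of_forall_le_left hab fun t ht => hub ▸ hbelow t ht
  rw [hub] at this
  linarith

theorem le_price_of_downcrossing (hsol : IsForwardSol δ β r h α c P T X u) {a b : ℝ}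
    (hab : a < b) (ha : a ∈ Icc 0 T) (hua : u a = α) (hbelow : ∀ t ∈ Ioo a b, u t ≤ α) :
    (r + δ) * α ≤ (P (X a) - c) * h := by
  have := (hsol a ha).2.nonpos_of_forall_le_right hab fun t ht => hua ▸ hbelow t ht
  rw [hua] at this
  linarith

theorem costate_eq_integral (hsol : IsForwardSol δ β r h α c P T X u) (hP : Continuous P)
    (huT : u T = 0) {a : ℝ} (ha : a ∈ Icc 0 T) :
    u a = h * ∫ s in a..T, exp (-(r + δ) * (s - a)) * (P (X s) - c) := by
  have hsub : Icc a T ⊆ Icc 0 T := Icc_subset_Icc_left ha.1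
  rw [eq_exp_mul_add_integral_of_hasDerivAt (g := fun t => (P (X t) - c) * h) ha.2
      (fun t ht => (hsol t (hsub ht)).2)
      (((hP.comp_continuousOn (hsol.continuousOn_state.mono hsub)).sub continuousOn_const).mul
        continuousOn_const),
    huT, mul_zero, zero_add, ← integral_const_mul]
  exact integral_congr fun s _ => by ring

theorem exists_alpha_lt_costate (hsol : IsForwardSol δ β r h α c P T X u) (hP : Continuous P)
    (hX0 : X 0 = X₀) (huT : u T = 0) {t₀ : ℝ} (ht₀ : t₀ ∈ Icc 0 T)
    (hI : α < h * ∫ s in t₀..T, exp (-(r + δ) * (s - t₀)) * (P (X₀ * exp (-δ * s)) - c)) :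
    ∃ t ∈ Icc 0 T, α < u t := by
  by_contra! hle
  have hX : ∀ s ∈ Icc 0 T, X s = X₀ * exp (-δ * s) := fun s hs => by
    rw [hsol.state_eq_mul_exp le_rfl hs.1 hs.2 fun t ht => hle t ⟨ht.1, ht.2.trans hs.2⟩, hX0,
      sub_zero]
  have hu₀ : u t₀ = h * ∫ s in t₀..T, exp (-(r + δ) * (s - t₀)) * (P (X₀ * exp (-δ * s)) - c) := by
    rw [hsol.costate_eq_integral hP huT ht₀]
    congr 1
    refine integral_congr fun s hs => ?_
    rw [uIcc_of_le ht₀.2] at hs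
    simp only [hX s (Icc_subset_Icc_left ht₀.1 hs)]
  linarith [hle t₀ ht₀]

theorem alpha_le_costate_of_eq (hsol : IsForwardSol δ β r h α c P T X u) (hδ : 0 < δ)
    (hh : 0 < h) (hX₀ : 0 ≤ X₀) (hPdec : StrictAnti P) (hX0 : X 0 = X₀)
    (hcross : (r + δ) * α < (P X₀ - c) * h) {b' : ℝ} (hb' : b' ≤ T) (hub' : u b' = α) :
    ∀ t ∈ Icc 0 b', α ≤ u t := by
  intro t₁ ht₁
  by_contra! hut₁
  obtain ⟨b, hb, hub, hbelow⟩ := exists_first_crossing ht₁.2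
    (hsol.continuousOn_costate.mono (Icc_subset_Icc ht₁.1 hb')) hut₁ hub'.ge
  have hbT : b ∈ Icc 0 T := ⟨ht₁.1.trans hb.1.le, hb.2.trans hb'⟩
  have hPb := hsol.price_le_of_upcrossing hb.1 hbT hub fun t ht => (hbelow t ⟨ht.1.le, ht.2⟩).le
  have hXb : X₀ < X b :=
    hPdec.lt_iff_gt.1 (sub_lt_sub_iff_right c |>.1 (lt_of_mul_lt_mul_right (by linarith) hh.le))
  have hu_after : ∀ t ∈ Icc t₁ b, u t ≤ α := fun t ht =>
    ht.2.eq_or_lt.elim (fun htb => htb ▸ hub.le) fun htb => (hbelow t ⟨ht.1, htb⟩).le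
  obtain ⟨a, ha, hab, hXa, hu_before⟩ :
      ∃ a, 0 ≤ a ∧ a < b ∧ X a ≤ X b ∧ ∀ t ∈ Icc a t₁, u t ≤ α := by
    by_cases hpre : ∃ t ∈ Icc 0 t₁, α ≤ u t
    · obtain ⟨t, ht, hut⟩ := hpre
      obtain ⟨a, ha, hua, habove⟩ := exists_last_crossing ht.2
        (hsol.continuousOn_costate.mono (Icc_subset_Icc ht.1 (ht₁.2.trans hb'))) hut hut₁
      have haT : a ∈ Icc 0 T := ⟨ht.1.trans ha.1, ha.2.le.trans (ht₁.2.trans hb')⟩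
      have hPa := hsol.le_price_of_downcrossing ha.2 haT hua fun s hs =>
        (habove s ⟨hs.1, hs.2.le⟩).le
      exact ⟨a, haT.1, ha.2.trans hb.1,
        hPdec.le_iff_ge.1 (sub_le_sub_iff_right c |>.1 (le_of_mul_le_mul_right (by linarith) hh)),
        fun s hs => hs.1.eq_or_lt.elim (fun has => has ▸ hua.le) fun has =>
          (habove s ⟨has, hs.2⟩).le⟩
    · push Not at hpre
      exact ⟨0, le_rfl, ht₁.1.trans_lt hb.1, hX0 ▸ hXb.le, fun s hs => (hpre s hs).le⟩
  have hu : ∀ t ∈ Icc a b, u t ≤ α := fun t ht => (le_total t t₁).elim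
    (fun htt₁ => hu_before t ⟨ht.1, htt₁⟩) fun htt₁ => hu_after t ⟨htt₁, ht.2⟩
  exact hXa.not_gt (hsol.state_lt_of_costate_le hδ ha hab hbT.2 hu (hX₀.trans_lt hXb))

end IsForwardSol

theorem stmt_8_general (δ β r h T α c X₀ : ℝ) (hδ : 0 < δ)
    (hh : 0 < h) (hα : 0 < α) (hX₀ : 0 ≤ X₀)
    (P : ℝ → ℝ) (hP : ∃ L : NNReal, LipschitzWith L P) (hPdec : StrictAnti P)
    (hassum1 : (P X₀ - c) * h > (r + δ) * α)
    (hassum2 : ∃ t₀ ∈ Set.Icc (0 : ℝ) T,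
      h * ∫ s in t₀..T,
        Real.exp (-(r + δ) * (s - t₀)) * (P (X₀ * Real.exp (-δ * s)) - c) > α)
    (X u : ℝ → ℝ)
    (hsol : IsForwardSol δ β r h α c P T X u)
    (hX0 : X 0 = X₀) (huT : u T = 0) :
    ∃ Tstar ∈ Set.Ioo (0 : ℝ) T,
      (∀ t ∈ Set.Icc (0 : ℝ) Tstar, α ≤ u t) ∧
      (∀ t ∈ Set.Icc Tstar T, u t ≤ α) := by
  obtain ⟨L, hL⟩ := hP
  obtain ⟨t₀, ht₀, hI⟩ := hassum2
  obtain ⟨t₂, ht₂, hut₂⟩ := hsol.exists_alpha_lt_costate hL.continuous hX0 huT ht₀ hI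
  obtain ⟨Tstar, hTstar, huTstar, hafter⟩ := exists_last_crossing ht₂.2
    (hsol.continuousOn_costate.mono (Icc_subset_Icc_left ht₂.1)) hut₂.le (huT ▸ hα)
  have hTstar_pos : 0 < Tstar := ht₂.1.trans_lt (hTstar.1.lt_of_ne (by rintro rfl; linarith))
  refine ⟨Tstar, ⟨hTstar_pos, hTstar.2⟩,
    hsol.alpha_le_costate_of_eq hδ hh hX₀ hPdec hX0 hassum1 hTstar.2.le huTstar, fun t ht => ?_⟩
  rcases ht.1.eq_or_lt with rfl | hlt
  · exact huTstar.le
  · exact (hafter t ⟨hlt, ht.2⟩).le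

/-- Under the standing assumption, the solution of the forward-backward
system admits a threshold time `T* ∈ (0,T)` with `u ≥ α` before and `u ≤ α` after. -/
theorem stmt_8 (δ β r h T α c X₀ : ℝ) (hδ : 0 < δ) (hβ : 0 < β) (hr : 0 < r)
    (hh : 0 < h) (hT : 0 < T) (hα : 0 < α) (hX₀ : 0 ≤ X₀)
    (P : ℝ → ℝ) (hP : ∃ L : NNReal, LipschitzWith L P) (hPdec : StrictAnti P)
    (hassum1 : (P X₀ - c) * h > (r + δ) * α)
    (hassum2 : ∃ t₀ ∈ Set.Icc (0 : ℝ) T,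
      h * ∫ s in t₀..T,
        Real.exp (-(r + δ) * (s - t₀)) * (P (X₀ * Real.exp (-δ * s)) - c) > α)
    (X u : ℝ → ℝ)
    (hsol : IsForwardSol δ β r h α c P T X u)
    (hX0 : X 0 = X₀) (huT : u T = 0) :
    ∃ Tstar ∈ Set.Ioo (0 : ℝ) T,
      (∀ t ∈ Set.Icc (0 : ℝ) Tstar, α ≤ u t) ∧
      (∀ t ∈ Set.Icc Tstar T, u t ≤ α) :=
  stmt_8_general δ β r h T α c X₀ hδ hh hα hX₀ P hP hPdec hassum1 hassum2 X u hsol hX0 huT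
end

section
/- No-installation for large producers: if lim_{y→∞} P(y) < c, then there exists x_max < ∞ (namely x_max = q·e^{δT} where P(q) < c) such that for any t ∈ [0,T] and any admissible trajectory x with x'_s = -δx_s + ν_s, ν ≥ 0, starting from x_t ≥ x_max·e^{-δt}, the running reward (P(x_s + Nx̄_s) - c)h·x_s - ν_s(α + β(ν_s + Nν̄_s)) is, for every s ∈ [t,T], strictly smaller under any control with ν_s > 0 than under the zero control along the uncontrolled trajectory x_t·e^{-δ(s-t)}; hence the zero control ν ≡ 0 is optimal on [t,T]. -/
open Set Real intervalIntegral Filter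

/-- Trajectory starting from capacity `x t` at time `t`, driven by the installation
rate `ν`. -/
noncomputable def traj (δ : ℝ) (t xt : ℝ) (ν : ℝ → ℝ) (s : ℝ) : ℝ :=
  xt * Real.exp (-δ * (s - t)) + ∫ y in t..s, Real.exp (-δ * (s - y)) * ν y

/-- No installation for large producers. If `lim_{y→∞} P(y) < c`, there
is `x_max` such that, from any starting capacity `x_t ≥ x_max e^{-δt}`, at every time
`s` where a control is strictly positive, the running reward is strictly smaller than
the reward of the zero control along the uncontrolled trajectory; hence installing is
never optimal. -/
theorem stmt_17 (δ β r h T α c : ℝ) (N : ℕ) (hδ : 0 < δ) (hβ : 0 < β)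
    (hr : 0 < r) (hh : 0 < h) (hT : 0 < T) (hα : 0 < α)
    (P : ℝ → ℝ) (hPdec : Antitone P)
    (hlim : ∃ l : ℝ, Filter.Tendsto P Filter.atTop (nhds l) ∧ l < c)
    (xbar νbar : ℝ → ℝ) (hxbar0 : ∀ s, 0 ≤ xbar s) (hνbar0 : ∀ s, 0 ≤ νbar s) :
    ∃ xmax : ℝ, 
      ∀ t ∈ Set.Icc (0 : ℝ) T, ∀ xt : ℝ, xmax * Real.exp (-δ * t) ≤ xt →
        ∀ ν : ℝ → ℝ, (∀ s, 0 ≤ ν s) →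
          ∀ s ∈ Set.Icc t T, 0 < ν s →
            (P (traj δ t xt ν s + (N : ℝ) * xbar s) - c) * h * traj δ t xt ν s
              - ν s * (α + β * (ν s + (N : ℝ) * νbar s))
            < (P (xt * Real.exp (-δ * (s - t)) + (N : ℝ) * xbar s) - c) * h
                * (xt * Real.exp (-δ * (s - t))) := by
  obtain ⟨l, hl, hlc⟩ := hlim
  obtain ⟨a, ha⟩ := Filter.eventually_atTop.1 (hl.eventually_lt_const hlc)
  set q : ℝ := max a 1 with hq
  have hqpos : (0:ℝ) < q := lt_of_lt_of_le one_pos (le_max_right _ _)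
  have hPq : P q < c := ha q (le_max_left _ _)
  refine ⟨q * Real.exp (δ * T), ?_⟩
  intro t ht xt hxt ν hν s hs hνs
  set B := xt * Real.exp (-δ * (s - t)) with hB
  have hI : 0 ≤ ∫ y in t..s, Real.exp (-δ * (s - y)) * ν y :=
    intervalIntegral.integral_nonneg hs.1
      (fun y _ => mul_nonneg (Real.exp_pos _).le (hν y))
  have hqB : q ≤ B := by
    have h1 : q * Real.exp (δ * T) * Real.exp (-δ * t) * Real.exp (-δ * (s - t))
        = q * Real.exp (δ * (T - s)) := by
      rw [mul_assoc, mul_assoc, ← Real.exp_add, ← Real.exp_add]; ring_nf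
    have h2 : q ≤ q * Real.exp (δ * (T - s)) := by
      nlinarith [Real.one_le_exp (by nlinarith [hs.2] : (0:ℝ) ≤ δ * (T - s))]
    calc q ≤ q * Real.exp (δ * (T - s)) := h2
      _ = q * Real.exp (δ * T) * Real.exp (-δ * t) * Real.exp (-δ * (s - t)) := h1.symm
      _ ≤ B := mul_le_mul_of_nonneg_right hxt (Real.exp_pos _).le
  have hBX : B ≤ traj δ t xt ν s := by
    simp only [traj, hB]; linarith
  have hqX : q ≤ traj δ t xt ν s := le_trans hqB hBX
  have hA2 : B ≤ B + (N : ℝ) * xbar s := by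
    nlinarith [hxbar0 s, Nat.cast_nonneg (α := ℝ) N]
  have hP2 : P (B + (N : ℝ) * xbar s) ≤ P q := hPdec (le_trans hqB hA2)
  have hP2c : P (B + (N : ℝ) * xbar s) - c < 0 := by linarith
  have hP1 : P (traj δ t xt ν s + (N : ℝ) * xbar s) ≤ P (B + (N : ℝ) * xbar s) :=
    hPdec (by linarith)
  have hpen : 0 < ν s * (α + β * (ν s + (N : ℝ) * νbar s)) := by
    have h0 : (0:ℝ) ≤ (N : ℝ) * νbar s := mul_nonneg (Nat.cast_nonneg N) (hνbar0 s)
    have h1 : 0 ≤ β * (ν s + (N : ℝ) * νbar s) :=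
      mul_nonneg hβ.le (by linarith)
    exact mul_pos hνs (by linarith)
  have hBpos : 0 < B := lt_of_lt_of_le hqpos hqB
  have h1 : (P (traj δ t xt ν s + (N : ℝ) * xbar s) - c) * h * traj δ t xt ν s
      ≤ (P (B + (N : ℝ) * xbar s) - c) * h * traj δ t xt ν s := by
    have hX : 0 ≤ traj δ t xt ν s := le_trans hqpos.le hqX
    exact mul_le_mul_of_nonneg_right
      (mul_le_mul_of_nonneg_right (sub_le_sub_right hP1 c) hh.le) hX
  have h2 : (P (B + (N : ℝ) * xbar s) - c) * h * traj δ t xt ν s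
      ≤ (P (B + (N : ℝ) * xbar s) - c) * h * B :=
    mul_le_mul_of_nonpos_left hBX
      (mul_nonpos_of_nonpos_of_nonneg hP2c.le hh.le)
  linarith
end
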